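/- arXiv:1605.09534 — 13 statements merged into one kernel-verified Lean document; each statement's English description precedes it below -/
import Mathlib

section
/- Let R be a ring and let e, f be idempotents in R such that e - f is nilpotent. Then e and f are conjugate in R, i.e., there exists a unit u of R with e = u f u⁻¹. -/
/-!
The element `v = e f + (1 - e)(1 - f)` satisfies `e v = e f = v f`. With the swapped element
`w = f e + (1 - f)(1 - e)` one computes `v w = 1 - (e - f)²` and `w v = 1 - (f - e)²`, which is the
same element, a unit because `(e - f)²` is nilpotent. So `v` has a left and a right inverse, hence
is a unit, and `e = v f v⁻¹`.
-/

theorem isUnit_of_isUnit_mul_of_isUnit_mul_swap {M : Type*} [Monoid M] {a b : M}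
    (hab : IsUnit (a * b)) (hba : IsUnit (b * a)) : IsUnit a :=
  isUnit_iff_exists_and_exists.mpr
    ⟨⟨b * ↑hab.unit⁻¹, by rw [← mul_assoc, hab.mul_val_inv]⟩,
      ⟨↑hba.unit⁻¹ * b, by rw [mul_assoc, hba.val_inv_mul]⟩⟩

section

variable {R : Type*} [Ring R] {e f : R}

def idempotentIntertwiner (e f : R) : R := e * f + (1 - e) * (1 - f)

theorem mul_idempotentIntertwiner (he : IsIdempotentElem e) (hf : IsIdempotentElem f) :
    e * idempotentIntertwiner e f = idempotentIntertwiner e f * f := by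
  simp only [idempotentIntertwiner, mul_add, add_mul, mul_sub, sub_mul, mul_one, one_mul,
    ← mul_assoc, he.eq, mul_assoc _ f f, hf.eq]
  abel

theorem idempotentIntertwiner_mul_swap (he : IsIdempotentElem e) (hf : IsIdempotentElem f) :
    idempotentIntertwiner e f * idempotentIntertwiner f e = 1 - (e - f) ^ 2 := by
  simp only [idempotentIntertwiner, sq, mul_add, add_mul, mul_sub, sub_mul, mul_one, one_mul,
    ← mul_assoc, he.eq, mul_assoc _ f f, hf.eq]
  abel

theorem isUnit_idempotentIntertwiner (he : IsIdempotentElem e) (hf : IsIdempotentElem f)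
    (h : IsNilpotent (e - f)) : IsUnit (idempotentIntertwiner e f) := by
  have hunit : IsUnit (1 - (e - f) ^ 2) := (h.pow_of_pos two_ne_zero).isUnit_one_sub
  refine isUnit_of_isUnit_mul_of_isUnit_mul_swap (b := idempotentIntertwiner f e) ?_ ?_
  · rwa [idempotentIntertwiner_mul_swap he hf]
  · rwa [idempotentIntertwiner_mul_swap hf he, ← neg_sq, neg_sub]

end

/-- If `e, f` are idempotents with `e - f` nilpotent, then `e` and `f` are conjugate. -/
theorem idempotents_conj_of_sub_nilpotent {R : Type*} [Ring R] (e f : R)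
    (he : IsIdempotentElem e) (hf : IsIdempotentElem f) (h : IsNilpotent (e - f)) :
    ∃ u : Rˣ, e = u * f * ↑u⁻¹ := by
  obtain ⟨u, hu⟩ := isUnit_idempotentIntertwiner he hf h
  refine ⟨u, ?_⟩
  rw [Units.eq_mul_inv_iff_mul_eq, hu]
  exact mul_idempotentIntertwiner he hf
end

section
/- Let R be a ring and let e, f be idempotents in R such that e - f lies in the Jacobson radical J(R). Then e and f are conjugate in R. -/
/-!
For idempotents `e, f` the element `v = e f + (1 - e)(1 - f)` intertwines them, `e v = e f = v f`,
and `v - 1 = (e - f) f - e (e - f)` lies in the Jacobson radical, so `v` is a unit and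
`e = v f v⁻¹`.
-/

namespace Ideal

variable {R : Type*} [Ring R]

/-- Mathlib's `Ideal.isUnit_of_sub_one_mem_jacobson_bot` assumes `R` commutative. -/
theorem isUnit_of_sub_one_mem_jacobson_bot_noncomm (r : R)
    (h : r - 1 ∈ jacobson (⊥ : Ideal R)) : IsUnit r := by
  obtain ⟨s, hs⟩ := exists_mul_sub_mem_of_sub_one_mem_jacobson r h
  rw [mem_bot, sub_eq_zero] at hs
  -- `s r = 1`, and `s` has a left inverse `t` as well, which forces `t = r`.
  have hs1 : s - 1 ∈ jacobson (⊥ : Ideal R) := by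
    have : s - 1 = s * -(r - 1) := by rw [neg_sub, mul_sub, hs, mul_one]
    exact this ▸ mul_mem_left _ s (neg_mem h)
  obtain ⟨t, ht⟩ := exists_mul_sub_mem_of_sub_one_mem_jacobson s hs1
  rw [mem_bot, sub_eq_zero] at ht
  have htr : t = r := left_inv_eq_right_inv ht hs
  exact ⟨⟨r, s, htr ▸ ht, hs⟩, rfl⟩

end Ideal

section Intertwiner

variable {R : Type*} [Ring R] {e f : R}

theorem idempotentIntertwiner_sub_one (he : IsIdempotentElem e) (hf : IsIdempotentElem f) :
    idempotentIntertwiner e f - 1 = (e - f) * f - e * (e - f) := by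
  have : (e - f) * f - e * (e - f) = 2 * (e * f) - e * e - f * f := by noncomm_ring
  rw [this, he.eq, hf.eq, idempotentIntertwiner]
  noncomm_ring

theorem idempotentIntertwiner_sub_one_mem {I : Ideal R} [I.IsTwoSided]
    (he : IsIdempotentElem e) (hf : IsIdempotentElem f) (h : e - f ∈ I) :
    idempotentIntertwiner e f - 1 ∈ I := by
  rw [idempotentIntertwiner_sub_one he hf]
  exact sub_mem (I.mul_mem_right f h) (I.mul_mem_left e h)

end Intertwiner

/-- If `e, f` are idempotents with `e - f` in the Jacobson radical, then `e` and `f`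
are conjugate. -/
theorem idempotents_conj_of_sub_mem_jacobson {R : Type*} [Ring R] (e f : R)
    (he : IsIdempotentElem e) (hf : IsIdempotentElem f)
    (h : e - f ∈ Ideal.jacobson (⊥ : Ideal R)) :
    ∃ u : Rˣ, e = u * f * ↑u⁻¹ := by
  obtain ⟨u, hu⟩ := Ideal.isUnit_of_sub_one_mem_jacobson_bot_noncomm _
    (idempotentIntertwiner_sub_one_mem he hf h)
  exact ⟨u, (Units.eq_mul_inv_iff_mul_eq u).mpr (hu ▸ mul_idempotentIntertwiner he hf)⟩
end

section
/- Let R be a clean ring and I an ideal of R. Then idempotents lift modulo I: for any a ∈ R with a² - a ∈ I there exists an idempotent e ∈ R with e - a ∈ I. -/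
/-!
Write `a = e + u` with `e` idempotent and `u` a unit. The conjugate `u⁻¹ (1 - e) u` is again
idempotent, and expanding with `e² = e` gives `(1 - e) u - u a = a - a²`; hence the conjugate
differs from `a` by `u⁻¹ (a - a²)`, which lies in every ideal containing `a² - a`.
-/

theorem IsIdempotentElem.units_inv_mul_mul {M : Type*} [Monoid M] {p : M}
    (hp : IsIdempotentElem p) (u : Mˣ) : IsIdempotentElem (↑u⁻¹ * p * u) := by
  simp only [IsIdempotentElem, mul_assoc, Units.mul_inv_cancel_left, ← mul_assoc p p, hp.eq]

theorem IsIdempotentElem.units_inv_mul_one_sub_mul_sub {R : Type*} [Ring R] {e a : R}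
    (he : IsIdempotentElem e) (u : Rˣ) (hae : a = e + u) :
    ↑u⁻¹ * (1 - e) * u - a = ↑u⁻¹ * (a - a ^ 2) := by
  have key : (1 - e) * u - u * a = a - a ^ 2 := by
    rw [hae, sq]
    simp only [mul_add, add_mul, sub_mul, one_mul, he.eq]
    abel
  rw [← key, mul_sub _ ((1 - e) * u), Units.inv_mul_cancel_left, mul_assoc]

/-- In a clean ring, idempotents lift modulo every (two-sided) ideal. -/
theorem idempotents_lift_of_clean {R : Type*} [Ring R]
    (hclean : ∀ a : R, ∃ e u : R, IsIdempotentElem e ∧ IsUnit u ∧ a = e + u)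
    (I : TwoSidedIdeal R) (a : R) (ha : a ^ 2 - a ∈ I) :
    ∃ e : R, IsIdempotentElem e ∧ e - a ∈ I := by
  obtain ⟨e, _, he, ⟨u, rfl⟩, hae⟩ := hclean a
  refine ⟨↑u⁻¹ * (1 - e) * u, he.one_sub.units_inv_mul_mul u, ?_⟩
  rw [he.units_inv_mul_one_sub_mul_sub u hae, ← neg_sub, mul_neg]
  exact I.neg_mem (I.mul_mem_left _ _ ha)
end

section
/- Let I be an ideal of a ring R contained in J(R) such that idempotents lift modulo I. If e, f are idempotents of R whose images in R/I are conjugate in R/I, then e and f are conjugate in R. -/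
/-!
Since `I ⊆ J(R)`, an element that is a unit modulo `I` is a unit of `R`, so the unit `v` of
`R/I` lifts to a unit `u` of `R`, and `g := u f u⁻¹` is an idempotent with `g ≡ e (mod I)`.
Two idempotents `e, g` with `e - g ∈ J(R)` are conjugate by `c := e g + (1 - e)(1 - g)`:
`e c = e g = c g`, and `c - 1 = (e - g) g - e (e - g) ∈ J(R)`, so `c` is a unit.
-/

section Monoid

variable {M : Type*} [Monoid M]

theorem isUnit_of_isUnit_mul_of_isUnit_mul {a b : M} (hab : IsUnit (a * b))
    (hba : IsUnit (b * a)) : IsUnit a :=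
  isUnit_iff_exists_and_exists.mpr
    ⟨⟨b * ↑hab.unit⁻¹, by rw [← mul_assoc, hab.mul_val_inv]⟩,
      ⟨↑hba.unit⁻¹ * b, by rw [mul_assoc, hba.val_inv_mul]⟩⟩

theorem IsConj.isIdempotentElem {a b : M} (h : IsConj a b) (ha : IsIdempotentElem a) :
    IsIdempotentElem b := by
  obtain ⟨c, hc⟩ := h
  obtain rfl : b = c * a * ↑c⁻¹ := (Units.eq_mul_inv_iff_mul_eq c).mpr hc.symm
  simp only [IsIdempotentElem, mul_assoc, Units.inv_mul_cancel_left, ha.mul_self_mul]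

theorem IsConj.exists_isConj_map_eq {N F : Type*} [Monoid N] [FunLike F M N]
    [MonoidHomClass F M N] {φ : F} [IsLocalHom φ] (hφ : Function.Surjective φ) {a b : M}
    (h : IsConj (φ a) (φ b)) : ∃ c, IsConj a c ∧ φ c = φ b := by
  obtain ⟨v, hv⟩ := h
  obtain ⟨x, hx⟩ := hφ v
  obtain ⟨u, rfl⟩ := isUnit_of_map_unit φ x (hx ▸ v.isUnit)
  refine ⟨u * a * ↑u⁻¹, ⟨u, by simp [SemiconjBy, mul_assoc]⟩, ?_⟩
  rw [← Units.mul_left_inj v, ← hv.eq, ← hx, ← map_mul, ← map_mul, Units.inv_mul_cancel_right]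

end Monoid

section Ring

variable {R : Type*} [Ring R]

theorem isUnit_of_sub_one_mem_jacobson_bot {r : R}
    (h : r - 1 ∈ Ideal.jacobson (⊥ : Ideal R)) : IsUnit r := by
  have exists_left_inv : ∀ x : R, x - 1 ∈ Ideal.jacobson ⊥ → ∃ y, y * x = 1 := fun x hx => by
    simpa [sub_eq_zero] using Ideal.exists_mul_sub_mem_of_sub_one_mem_jacobson x hx
  obtain ⟨s, hsr⟩ := exists_left_inv r h
  have hs : s - 1 ∈ Ideal.jacobson ⊥ := by
    have : s - 1 = -(s * (r - 1)) := by rw [mul_sub, hsr, mul_one, neg_sub]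
    exact this ▸ neg_mem ((Ideal.jacobson ⊥).mul_mem_left s h)
  obtain ⟨w, hws⟩ := exists_left_inv s hs
  exact isUnit_iff_exists_and_exists.mpr ⟨⟨s, left_inv_eq_right_inv hws hsr ▸ hws⟩, ⟨s, hsr⟩⟩

theorem TwoSidedIdeal.ringCon_mk'_eq_iff_sub_mem (I : TwoSidedIdeal R) {a b : R} :
    I.ringCon.mk' a = I.ringCon.mk' b ↔ a - b ∈ I :=
  I.ringCon.eq.trans (I.rel_iff a b)

theorem TwoSidedIdeal.isLocalHom_ringCon_mk' (I : TwoSidedIdeal R)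
    (hI : ∀ x ∈ I, x ∈ Ideal.jacobson (⊥ : Ideal R)) : IsLocalHom I.ringCon.mk' := by
  have isUnit_of_mk'_eq_one : ∀ x : R, I.ringCon.mk' x = 1 → IsUnit x := fun x hx =>
    isUnit_of_sub_one_mem_jacobson_bot <| hI _ <|
      I.ringCon_mk'_eq_iff_sub_mem.mp (hx.trans (map_one _).symm)
  refine ⟨fun a ha => ?_⟩
  obtain ⟨b, hb⟩ := I.ringCon.mk'_surjective ↑ha.unit⁻¹
  exact isUnit_of_isUnit_mul_of_isUnit_mul
    (isUnit_of_mk'_eq_one _ (by rw [map_mul, hb, ha.mul_val_inv]))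
    (isUnit_of_mk'_eq_one _ (by rw [map_mul, hb, ha.val_inv_mul]))

theorem IsIdempotentElem.mul_conjugator_eq {e g : R} (he : IsIdempotentElem e)
    (hg : IsIdempotentElem g) :
    e * (e * g + (1 - e) * (1 - g)) = (e * g + (1 - e) * (1 - g)) * g := by
  simp only [mul_add, add_mul, mul_sub, sub_mul, mul_one, one_mul, ← mul_assoc, he.eq, hg.eq,
    hg.mul_mul_self]
  abel

theorem IsIdempotentElem.isConj_of_sub_mem_jacobson_bot {e g : R} (he : IsIdempotentElem e)
    (hg : IsIdempotentElem g) (h : e - g ∈ Ideal.jacobson (⊥ : Ideal R)) : IsConj g e := by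
  set c := e * g + (1 - e) * (1 - g)
  have hc : c - 1 = (e - g) * g - e * (e - g) := by
    simp only [c, mul_sub, sub_mul, mul_one, one_mul, he.eq, hg.eq]
    abel
  have hcJ : c - 1 ∈ Ideal.jacobson ⊥ :=
    hc ▸ sub_mem ((Ideal.jacobson ⊥).mul_mem_right g h) ((Ideal.jacobson ⊥).mul_mem_left e h)
  exact ⟨(isUnit_of_sub_one_mem_jacobson_bot hcJ).unit, (he.mul_conjugator_eq hg).symm⟩

end Ring

theorem conj_of_conj_quotient_general {R : Type*} [Ring R] (I : TwoSidedIdeal R)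
    (hI : ∀ x ∈ I, x ∈ Ideal.jacobson (⊥ : Ideal R))
    (e f : R) (he : IsIdempotentElem e) (hf : IsIdempotentElem f)
    (h : ∃ v : (I.ringCon.Quotient)ˣ, I.ringCon.mk' e = v * I.ringCon.mk' f * ↑v⁻¹) :
    ∃ u : Rˣ, e = u * f * ↑u⁻¹ := by
  have := I.isLocalHom_ringCon_mk' hI
  have hconj : IsConj (I.ringCon.mk' f) (I.ringCon.mk' e) := by
    obtain ⟨v, hv⟩ := h
    exact ⟨v, ((Units.eq_mul_inv_iff_mul_eq v).mp hv).symm⟩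
  obtain ⟨g, hfg, hge⟩ := hconj.exists_isConj_map_eq I.ringCon.mk'_surjective
  have heg : e - g ∈ Ideal.jacobson ⊥ := hI _ (I.ringCon_mk'_eq_iff_sub_mem.mp hge.symm)
  obtain ⟨u, hu⟩ := hfg.trans (he.isConj_of_sub_mem_jacobson_bot (hfg.isIdempotentElem hf) heg)
  exact ⟨u, (Units.eq_mul_inv_iff_mul_eq u).mpr hu.eq.symm⟩

/-- If `I ⊆ J(R)`, idempotents lift modulo `I`, and the images of idempotents `e, f` are
conjugate in `R/I`, then `e` and `f` are conjugate in `R`. -/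
theorem conj_of_conj_quotient {R : Type*} [Ring R] (I : TwoSidedIdeal R)
    (hI : ∀ x ∈ I, x ∈ Ideal.jacobson (⊥ : Ideal R))
    (hlift : ∀ a : R, a ^ 2 - a ∈ I → ∃ e : R, IsIdempotentElem e ∧ e - a ∈ I)
    (e f : R) (he : IsIdempotentElem e) (hf : IsIdempotentElem f)
    (h : ∃ v : (I.ringCon.Quotient)ˣ, I.ringCon.mk' e = v * I.ringCon.mk' f * ↑v⁻¹) :
    ∃ u : Rˣ, e = u * f * ↑u⁻¹ :=
  conj_of_conj_quotient_general I hI e f he hf h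
end

section
/- A ring R is uniquely clean if and only if R is conjugate clean and all idempotents of R are central. -/
/-- Two idempotents are conjugate by a unit. -/
def ConjugateIdem {R : Type*} [Ring R] (e f : R) : Prop := ∃ u : Rˣ, e = u * f * ↑u⁻¹

/-- `a` is clean: a sum of an idempotent and a unit. -/
def IsCleanElem {R : Type*} [Ring R] (a : R) : Prop :=
  ∃ e u : R, IsIdempotentElem e ∧ IsUnit u ∧ a = e + u

/-- `a` is conjugate clean. -/
def IsConjCleanElem {R : Type*} [Ring R] (a : R) : Prop :=
  IsCleanElem a ∧ ∀ e u f v : R, IsIdempotentElem e → IsUnit u → a = e + u →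
    IsIdempotentElem f → IsUnit v → a = f + v → ConjugateIdem e f

/-
If `R` is uniquely clean and `e` is idempotent, then for every `r` the element `n = e r (1 - e)`
squares to zero and `e + n` is idempotent; since `n - 1` is a unit, `e + n - 1` has the two clean
decompositions `(e + n) + (-1)` and `e + (n - 1)`, so `n = 0`. Applied to the idempotent `1 - e`
this also gives `(1 - e) r e = 0`, hence `e r = e r e = r e`. Conversely, a central idempotent is
its only conjugate, so two clean decompositions of an element of a conjugate clean ring with
central idempotents share their idempotent, and hence also their unit.
-/

section

variable {R : Type*} [Ring R]

def IsUniquelyCleanElem (a : R) : Prop :=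
  IsCleanElem a ∧ ∀ e u f v : R, IsIdempotentElem e → IsUnit u → a = e + u →
    IsIdempotentElem f → IsUnit v → a = f + v → e = f ∧ u = v

theorem ConjugateIdem.refl (e : R) : ConjugateIdem e e := ⟨1, by simp⟩

theorem ConjugateIdem.eq_of_forall_mul_comm {e f : R} (h : ConjugateIdem e f)
    (hf : ∀ r, f * r = r * f) : e = f := by
  obtain ⟨u, rfl⟩ := h
  rw [mul_assoc, hf, ← mul_assoc, Units.mul_inv, one_mul]

theorem IsUniquelyCleanElem.isConjCleanElem {a : R} (h : IsUniquelyCleanElem a) :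
    IsConjCleanElem a :=
  ⟨h.1, fun e u f v he hu hae hf hv haf ↦
    (h.2 e u f v he hu hae hf hv haf).1 ▸ ConjugateIdem.refl e⟩

theorem IsConjCleanElem.isUniquelyCleanElem {a : R} (h : IsConjCleanElem a)
    (hcent : ∀ e : R, IsIdempotentElem e → ∀ r : R, e * r = r * e) : IsUniquelyCleanElem a := by
  refine ⟨h.1, fun e u f v he hu hae hf hv haf ↦ ?_⟩
  have hef : e = f := (h.2 e u f v he hu hae hf hv haf).eq_of_forall_mul_comm (hcent f hf)
  exact ⟨hef, add_left_cancel (hef ▸ hae.symm.trans haf)⟩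

theorem IsIdempotentElem.mul_mul_one_sub_mul_self {e : R} (he : IsIdempotentElem e) (x : R) :
    e * x * (1 - e) * e = 0 := by
  rw [mul_assoc, he.one_sub_mul_self, mul_zero]

theorem IsIdempotentElem.mul_mul_one_sub_sq {e : R} (he : IsIdempotentElem e) (x : R) :
    e * x * (1 - e) * (e * x * (1 - e)) = 0 := by
  simp only [← mul_assoc, he.mul_mul_one_sub_mul_self, zero_mul]

theorem IsIdempotentElem.add_mul_mul_one_sub {e : R} (he : IsIdempotentElem e) (x : R) :
    IsIdempotentElem (e + e * x * (1 - e)) := by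
  have hn : e * (e * x * (1 - e)) = e * x * (1 - e) := by simp only [← mul_assoc, he.eq]
  rw [IsIdempotentElem, add_mul, mul_add, mul_add, he.eq, hn, he.mul_mul_one_sub_mul_self,
    he.mul_mul_one_sub_sq, add_zero, add_zero]

theorem mul_comm_of_mul_mul_one_sub_eq_zero {e r : R} (hright : e * r * (1 - e) = 0)
    (hleft : (1 - e) * r * e = 0) : e * r = r * e := by
  rw [mul_one_sub, sub_eq_zero] at hright
  rw [mul_assoc, one_sub_mul, sub_eq_zero, ← mul_assoc] at hleft
  rw [hright, hleft]

theorem IsUniquelyCleanElem.eq_zero_of_isIdempotentElem_add {e n : R}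
    (h : IsUniquelyCleanElem (e + n - 1)) (he : IsIdempotentElem e)
    (hen : IsIdempotentElem (e + n)) (hn : n * n = 0) : n = 0 := by
  have hunit : IsUnit (n - 1) := IsNilpotent.isUnit_sub_one ⟨2, by rw [pow_two, hn]⟩
  have hef := (h.2 (e + n) (-1) e (n - 1) hen isUnit_one.neg (by abel) he hunit (by abel)).1
  simpa using hef

end

/-- `R` is uniquely clean iff it is conjugate clean and all idempotents are central. -/
theorem uniquelyClean_iff_conjClean_and_idem_central {R : Type*} [Ring R] :
    (∀ a : R, IsCleanElem a ∧
      ∀ e u f v : R, IsIdempotentElem e → IsUnit u → a = e + u →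
        IsIdempotentElem f → IsUnit v → a = f + v → e = f ∧ u = v) ↔
    ((∀ a : R, IsConjCleanElem a) ∧
      ∀ e : R, IsIdempotentElem e → ∀ r : R, e * r = r * e) := by
  change (∀ a : R, IsUniquelyCleanElem a) ↔ _
  constructor
  · intro h
    have hcorner : ∀ e : R, IsIdempotentElem e → ∀ r, e * r * (1 - e) = 0 := fun e he r ↦
      (h _).eq_zero_of_isIdempotentElem_add he (he.add_mul_mul_one_sub r)
        (he.mul_mul_one_sub_sq r)
    refine ⟨fun a ↦ (h a).isConjCleanElem, fun e he r ↦
      mul_comm_of_mul_mul_one_sub_eq_zero (hcorner e he r) ?_⟩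
    simpa using hcorner (1 - e) he.one_sub r
  · rintro ⟨hconj, hcent⟩ a
    exact (hconj a).isUniquelyCleanElem hcent
end

section
/- Every idempotent of a nil clean ring R is a conjugate nil clean element of R. -/
/-- `a` is nil clean: a sum of an idempotent and a nilpotent. -/
def IsNilCleanElem {R : Type*} [Ring R] (a : R) : Prop :=
  ∃ e n : R, IsIdempotentElem e ∧ IsNilpotent n ∧ a = e + n

/-- `a` is conjugate nil clean. -/
def IsConjNilCleanElem {R : Type*} [Ring R] (a : R) : Prop :=
  IsNilCleanElem a ∧ ∀ e n f m : R, IsIdempotentElem e → IsNilpotent n → a = e + n →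
    IsIdempotentElem f → IsNilpotent m → a = f + m → ConjugateIdem e f

namespace ConjugateIdem

variable {R : Type*} [Ring R] {e f g : R}

theorem symm (h : ConjugateIdem e f) : ConjugateIdem f e := by
  obtain ⟨u, rfl⟩ := h
  exact ⟨u⁻¹, by simp [mul_assoc]⟩

theorem trans (hef : ConjugateIdem e f) (hfg : ConjugateIdem f g) : ConjugateIdem e g := by
  obtain ⟨u, rfl⟩ := hef
  obtain ⟨v, rfl⟩ := hfg
  exact ⟨u * v, by simp [mul_assoc]⟩

end ConjugateIdem

theorem conjugateIdem_of_isUnit_of_mul_eq_mul {R : Type*} [Ring R] {e f a : R}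
    (ha : IsUnit a) (h : e * a = a * f) : ConjugateIdem e f := by
  obtain ⟨u, rfl⟩ := ha
  exact ⟨u, (Units.eq_mul_inv_iff_mul_eq u).2 h⟩

section Intertwiner

variable {R : Type*} [Ring R] {e f : R}

def intertwiner (e f : R) : R := e * f + (1 - e) * (1 - f)

theorem mul_intertwiner_eq_intertwiner_mul (he : IsIdempotentElem e) (hf : IsIdempotentElem f) :
    e * intertwiner e f = intertwiner e f * f := by
  simp only [intertwiner, mul_add, add_mul, mul_sub, sub_mul, mul_one, one_mul, ← mul_assoc,
    he.eq, hf.eq]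
  simp only [mul_assoc, hf.eq]
  abel

theorem intertwiner_mul_intertwiner_swap (he : IsIdempotentElem e) (hf : IsIdempotentElem f) :
    intertwiner e f * intertwiner f e = 1 - (e - f) ^ 2 := by
  simp only [intertwiner, sq, mul_add, add_mul, mul_sub, sub_mul, mul_one, one_mul, ← mul_assoc,
    he.eq, hf.eq]
  simp only [mul_assoc, hf.eq]
  abel

theorem isUnit_intertwiner (he : IsIdempotentElem e) (hf : IsIdempotentElem f)
    (hnil : IsNilpotent (e - f)) : IsUnit (intertwiner e f) := by
  have hunit : IsUnit (1 - (e - f) ^ 2) := (hnil.pow_succ 1).isUnit_one_sub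
  refine isUnit_of_isUnit_mul_of_isUnit_mul_swap (b := intertwiner f e) ?_ ?_
  · rwa [intertwiner_mul_intertwiner_swap he hf]
  · rwa [intertwiner_mul_intertwiner_swap hf he, ← neg_sub e f, neg_sq]

theorem IsIdempotentElem.conjugateIdem_of_isNilpotent_sub (he : IsIdempotentElem e)
    (hf : IsIdempotentElem f) (hnil : IsNilpotent (e - f)) : ConjugateIdem e f :=
  conjugateIdem_of_isUnit_of_mul_eq_mul (isUnit_intertwiner he hf hnil)
    (mul_intertwiner_eq_intertwiner_mul he hf)

end Intertwiner

theorem idempotent_isConjNilClean_general {R : Type*} [Ring R]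
    (e : R) (he : IsIdempotentElem e) :
    IsConjNilCleanElem e := by
  refine ⟨⟨e, 0, he, IsNilpotent.zero, (add_zero e).symm⟩, ?_⟩
  intro f n g m hf hn hfn hg hm hgm
  have hef : ConjugateIdem e f :=
    he.conjugateIdem_of_isNilpotent_sub hf (by rwa [hfn, add_sub_cancel_left])
  have heg : ConjugateIdem e g :=
    he.conjugateIdem_of_isNilpotent_sub hg (by rwa [hgm, add_sub_cancel_left])
  exact hef.symm.trans heg

/-- Every idempotent of a nil clean ring is conjugate nil clean. -/
theorem idempotent_isConjNilClean {R : Type*} [Ring R]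
    (hR : ∀ a : R, IsNilCleanElem a) (e : R) (he : IsIdempotentElem e) :
    IsConjNilCleanElem e :=
  idempotent_isConjNilClean_general e he
end

section
/- Let a be a conjugate clean element of a ring R. If a or a - 1 is invertible, then a is uniquely clean. In particular, every unit of R that is conjugate clean is uniquely clean. -/
section

variable {R : Type*} [Ring R]

theorem ConjugateIdem.eq_of_mem_center {e f : R} (h : ConjugateIdem e f)
    (hf : f ∈ Set.center R) : e = f := by
  obtain ⟨w, rfl⟩ := h
  rw [← ((Set.mem_center_iff.mp hf).comm w).eq, mul_assoc, Units.mul_inv, mul_one]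

theorem IsConjCleanElem.idempotent_eq_of_mem_center {a e u g w : R} (ha : IsConjCleanElem a)
    (he : IsIdempotentElem e) (hu : IsUnit u) (hae : a = e + u)
    (hg : IsIdempotentElem g) (hw : IsUnit w) (hag : a = g + w) (hg_center : g ∈ Set.center R) :
    e = g :=
  (ha.2 e u g w he hu hae hg hw hag).eq_of_mem_center hg_center

theorem IsConjCleanElem.eq_of_central_decomposition {a g w : R} (ha : IsConjCleanElem a)
    (hg : IsIdempotentElem g) (hw : IsUnit w) (hag : a = g + w) (hg_center : g ∈ Set.center R)
    {e u f v : R} (he : IsIdempotentElem e) (hu : IsUnit u) (hae : a = e + u)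
    (hf : IsIdempotentElem f) (hv : IsUnit v) (haf : a = f + v) : e = f ∧ u = v := by
  have he_eq : e = g := ha.idempotent_eq_of_mem_center he hu hae hg hw hag hg_center
  have hf_eq : f = g := ha.idempotent_eq_of_mem_center hf hv haf hg hw hag hg_center
  refine ⟨he_eq.trans hf_eq.symm, ?_⟩
  rw [hae, he_eq, hf_eq] at haf
  exact add_left_cancel haf

end

/-- If `a` is conjugate clean and `a` or `a - 1` is invertible, then `a` is uniquely
clean. -/
theorem uniquelyClean_of_conjClean_of_unit {R : Type*} [Ring R] (a : R)
    (ha : IsConjCleanElem a) (h : IsUnit a ∨ IsUnit (a - 1)) :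
    ∀ e u f v : R, IsIdempotentElem e → IsUnit u → a = e + u →
      IsIdempotentElem f → IsUnit v → a = f + v → e = f ∧ u = v := by
  intro e u f v he hu hae hf hv haf
  rcases h with ha_unit | ha_sub_one_unit
  · exact ha.eq_of_central_decomposition .zero ha_unit (zero_add a).symm Set.zero_mem_center
      he hu hae hf hv haf
  · exact ha.eq_of_central_decomposition .one ha_sub_one_unit (add_sub_cancel 1 a).symm
      Set.one_mem_center he hu hae hf hv haf
end

section
/- The matrix ring M₂(𝔽₂) of 2×2 matrices over the field with two elements is conjugate nil clean: every matrix is a sum of an idempotent and a nilpotent matrix, and for any two such decompositions of the same matrix, the idempotents are conjugate by an invertible matrix. -/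
open Module LinearMap

theorem ConjugateIdem.map {R S F : Type*} [Ring R] [Ring S] [FunLike F R S] [RingHomClass F R S]
    (φ : F) {e f : R} (h : ConjugateIdem e f) : ConjugateIdem (φ e) (φ f) := by
  obtain ⟨u, rfl⟩ := h
  exact ⟨Units.map (φ : R →* S) u, by simp⟩

theorem LinearEquiv.conj_eq_mul {R M : Type*} [CommSemiring R] [AddCommMonoid M] [Module R M]
    (u : M ≃ₗ[R] M) (f : End R M) :
    u.conj f = (GeneralLinearGroup.ofLinearEquiv u : End R M) * f *
      ↑(GeneralLinearGroup.ofLinearEquiv u)⁻¹ :=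
  rfl

section FiniteDimensional

variable {K V : Type*} [Field K] [AddCommGroup V] [Module K V] [FiniteDimensional K V]

theorem IsIdempotentElem.conjugateIdem_of_finrank_range_eq {e f : End K V}
    (he : IsIdempotentElem e) (hf : IsIdempotentElem f)
    (h : finrank K (range e) = finrank K (range f)) : ConjugateIdem e f := by
  have hker : finrank K (ker e) = finrank K (ker f) := by
    have := finrank_range_add_finrank_ker e
    have := finrank_range_add_finrank_ker f
    omega
  let φ : (range f × ker f) ≃ₗ[K] (range e × ker e) :=
    (LinearEquiv.ofFinrankEq _ _ h.symm).prodCongr (LinearEquiv.ofFinrankEq _ _ hker.symm)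
  have hφ : φ.conj (prodMap id 0) = prodMap id 0 := by ext <;> simp [φ]
  let u := ((range f).prodEquivOfIsCompl (ker f) hf.isCompl).symm ≪≫ₗ φ ≪≫ₗ
    (range e).prodEquivOfIsCompl (ker e) he.isCompl
  refine ⟨GeneralLinearGroup.ofLinearEquiv u, ?_⟩
  rw [← LinearEquiv.conj_eq_mul, he.isProj_range.eq_conj_prodMap, hf.isProj_range.eq_conj_prodMap]
  simp [u, ← LinearEquiv.conj_trans, hφ]

theorem IsIdempotentElem.finrank_range_eq_of_add_nilpotent_eq {p : ℕ} [CharP K p]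
    (hd : finrank K V ≤ p) {e f n m : End K V} (he : IsIdempotentElem e) (hf : IsIdempotentElem f)
    (hn : IsNilpotent n) (hm : IsNilpotent m) (h : e + n = f + m) :
    finrank K (range e) = finrank K (range f) := by
  wlog hle : finrank K (range e) ≤ finrank K (range f) generalizing e f n m
  · exact (this hf he hm hn h.symm (le_of_not_ge hle)).symm
  refine hle.eq_or_lt.resolve_right fun hlt => ?_
  have htrace : (finrank K (range e) : K) = finrank K (range f) := by
    have := congrArg (trace K V) h
    rwa [map_add, map_add, (isNilpotent_trace_of_isNilpotent hn).eq_zero,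
      (isNilpotent_trace_of_isNilpotent hm).eq_zero, he.isProj_range.trace,
      hf.isProj_range.trace, add_zero, add_zero] at this
  have hp : p ≤ finrank K (range f) - finrank K (range e) :=
    Nat.le_of_dvd (by omega) <| (Nat.modEq_iff_dvd' hle).mp <|
      (CharP.natCast_eq_natCast K p).mp htrace
  have hrank := finrank_range_add_finrank_ker f
  have he0 : e = 0 := range_eq_bot.mp (Submodule.finrank_eq_zero.mp (by omega))
  have hf1 : f = 1 := by
    rw [eq_comm, ← sub_eq_zero, ← range_eq_bot, ← hf.ker_eq_range_one_sub,
      ← Submodule.finrank_eq_zero]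
    omega
  have : Nontrivial V := Module.nontrivial_of_finrank_pos (R := K) (by omega)
  rw [he0, hf1, zero_add] at h
  exact hn.not_isUnit (h ▸ hm.isUnit_one_add)

end FiniteDimensional

theorem Matrix.conjugateIdem_of_add_nilpotent_eq {K ι : Type*} [Field K] [Fintype ι]
    [DecidableEq ι] {p : ℕ} [CharP K p] (hd : Fintype.card ι ≤ p) {e f n m : Matrix ι ι K}
    (he : IsIdempotentElem e) (hf : IsIdempotentElem f) (hn : IsNilpotent n)
    (hm : IsNilpotent m) (h : e + n = f + m) : ConjugateIdem e f := by
  let φ := Matrix.toLinAlgEquiv' (R := K) (n := ι)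
  have hrank := (he.map φ).finrank_range_eq_of_add_nilpotent_eq (by simpa using hd) (hf.map φ)
    (hn.map φ) (hm.map φ) (by rw [← map_add, h, map_add])
  simpa using ((he.map φ).conjugateIdem_of_finrank_range_eq (hf.map φ) hrank).map φ.symm

theorem Matrix.isNilCleanElem_fin_two_zmod_two (a : Matrix (Fin 2) (Fin 2) (ZMod 2)) :
    IsNilCleanElem a := by
  obtain ⟨e, he, hsq⟩ : ∃ e, e * e = e ∧ (a - e) * (a - e) = 0 := by revert a; decide
  exact ⟨e, a - e, he, ⟨2, by rw [sq, hsq]⟩, by abel⟩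

/-- `M₂(𝔽₂)` is conjugate nil clean. -/
theorem matrix_two_zmod_two_conjNilClean :
    ∀ a : Matrix (Fin 2) (Fin 2) (ZMod 2), IsConjNilCleanElem a := by
  intro a
  refine ⟨Matrix.isNilCleanElem_fin_two_zmod_two a, fun e n f m he hn hae hf hm haf => ?_⟩
  exact Matrix.conjugateIdem_of_add_nilpotent_eq (p := 2) (by simp) he hf hn hm (hae ▸ haf)
end

section
/- For n ≥ 3, the matrix ring Mₙ(𝔽₂) is not conjugate nil clean: there exists a matrix with two nil clean decompositions whose idempotents are not conjugate. -/
/-!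
A nilpotent `a` has the nil clean decomposition `a = 0 + a`, and the idempotent `0` is conjugate
only to itself. So it suffices to write some nilpotent matrix as `f + m` with `f ≠ 0` idempotent and
`m` nilpotent. In `M₃(𝔽₂)` this happens for `f = diag(1, 1, 0)`, and the upper left corner embedding
`M₃(𝔽₂) → Mₙ(𝔽₂)` is an injective non-unital ring homomorphism, which carries the example to
every `n ≥ 3`.
-/

theorem ConjugateIdem.eq_zero_of_zero_left {R : Type*} [Ring R] {f : R}
    (h : ConjugateIdem 0 f) : f = 0 := by
  obtain ⟨u, hu⟩ := h
  rwa [eq_comm, Units.mul_left_eq_zero, Units.mul_right_eq_zero] at hu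

theorem IsNilpotent.map_nonUnitalRingHom {R S : Type*} [Semiring R] [Semiring S] {r : R}
    (hr : IsNilpotent r) (φ : R →ₙ+* S) : IsNilpotent (φ r) := by
  obtain ⟨k, hk⟩ := hr
  have map_pow_succ : ∀ j : ℕ, φ r ^ (j + 1) = φ (r ^ (j + 1)) := by
    intro j
    induction j with
    | zero => simp
    | succ j ih => rw [_root_.pow_succ, ih, ← map_mul, ← _root_.pow_succ]
  exact ⟨k + 1, by rw [map_pow_succ, _root_.pow_succ, hk, zero_mul, map_zero]⟩

namespace Matrix

variable (R : Type*) [Semiring R]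

def cornerEmbedding (m o : Type*) [Fintype m] [Fintype o] :
    Matrix m m R →ₙ+* Matrix (m ⊕ o) (m ⊕ o) R where
  toFun A := fromBlocks A 0 0 0
  map_mul' A B := by simp [fromBlocks_multiply]
  map_zero' := by simp
  map_add' A B := by simp [fromBlocks_add]

theorem cornerEmbedding_injective (m o : Type*) [Fintype m] [Fintype o] :
    Function.Injective (cornerEmbedding R m o) :=
  fun _ _ h => (fromBlocks_inj.mp h).1

theorem exists_injective_nonUnitalRingHom_fin_of_le {k n : ℕ} (hkn : k ≤ n) :
    ∃ φ : Matrix (Fin k) (Fin k) R →ₙ+* Matrix (Fin n) (Fin n) R, Function.Injective φ := by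
  let e : Fin k ⊕ Fin (n - k) ≃ Fin n := finSumFinEquiv.trans (finCongr (by omega))
  exact ⟨(reindexRingEquiv R e).toNonUnitalRingHom.comp (cornerEmbedding R _ _),
    (reindexRingEquiv R e).injective.comp (cornerEmbedding_injective R _ _)⟩

end Matrix

theorem Matrix.exists_idempotent_ne_zero_add_nilpotent_isNilpotent_fin_three :
    ∃ f m : Matrix (Fin 3) (Fin 3) (ZMod 2),
      IsIdempotentElem f ∧ f ≠ 0 ∧ IsNilpotent m ∧ IsNilpotent (f + m) :=
  ⟨!![1, 0, 0; 0, 1, 0; 0, 0, 0], !![1, 1, 0; 1, 0, 1; 1, 0, 1],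
    by unfold IsIdempotentElem; decide, by decide, ⟨3, by decide⟩, ⟨3, by decide⟩⟩

/-- For `n ≥ 3`, `Mₙ(𝔽₂)` is not conjugate nil clean: some matrix has two nil clean
decompositions whose idempotents are not conjugate. -/
theorem matrix_zmod_two_not_conjNilClean (n : ℕ) (hn : 3 ≤ n) :
    ∃ a e l f m : Matrix (Fin n) (Fin n) (ZMod 2),
      IsIdempotentElem e ∧ IsNilpotent l ∧ a = e + l ∧
      IsIdempotentElem f ∧ IsNilpotent m ∧ a = f + m ∧ ¬ ConjugateIdem e f := by
  obtain ⟨f, m, hf, hf0, hm, hfm⟩ :=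
    Matrix.exists_idempotent_ne_zero_add_nilpotent_isNilpotent_fin_three
  obtain ⟨φ, hφ⟩ := Matrix.exists_injective_nonUnitalRingHom_fin_of_le (ZMod 2) hn
  refine ⟨φ (f + m), 0, φ (f + m), φ f, φ m, .zero, hfm.map_nonUnitalRingHom φ,
    (zero_add _).symm, hf.map φ, hm.map_nonUnitalRingHom φ, map_add φ f m, fun h => ?_⟩
  exact hf0 (hφ (h.eq_zero_of_zero_left.trans (map_zero φ).symm))
end

section
/- For any ring R and n ≥ 2, the matrix ring Mₙ(R) is not conjugate clean: there is an element with two clean decompositions whose idempotents are not conjugate (for example the permutation matrix swapping the first two basis vectors). -/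
namespace Matrix

open Equiv

variable {ι R : Type*} [DecidableEq ι]

theorem permMatrix_mul_single [Fintype ι] [NonAssocSemiring R] (σ : Perm ι) (a b : ι) (c : R) :
    σ.permMatrix R * single a b c = single (σ.symm a) b c := by
  ext x y
  simp [PEquiv.toMatrix_toPEquiv_mul, single_apply, symm_apply_eq]

theorem single_mul_permMatrix [Fintype ι] [NonAssocSemiring R] (σ : Perm ι) (a b : ι) (c : R) :
    single a b c * σ.permMatrix R = single a (σ b) c := by
  ext x y
  simp [PEquiv.mul_toMatrix_toPEquiv, single_apply, eq_symm_apply]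

theorem swap_permMatrix_mul_self [Fintype ι] [NonAssocSemiring R] (i j : ι) :
    (Equiv.swap i j).permMatrix R * (Equiv.swap i j).permMatrix R = 1 := by
  rw [← permMatrix_mul, Equiv.swap_mul_self, permMatrix_one]

theorem isUnit_swap_permMatrix [Fintype ι] [Semiring R] (i j : ι) :
    IsUnit ((Equiv.swap i j).permMatrix R) :=
  ⟨⟨_, _, swap_permMatrix_mul_self i j, swap_permMatrix_mul_self i j⟩, rfl⟩

theorem isUnit_swap_permMatrix_sub_single [Fintype ι] [Ring R] {i j : ι} (hij : i ≠ j) :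
    IsUnit ((Equiv.swap i j).permMatrix R - single i i 1) := by
  set P := (Equiv.swap i j).permMatrix R
  have hPP : P * P = 1 := swap_permMatrix_mul_self i j
  refine ⟨⟨P - single i i 1, P + single j j 1, ?_, ?_⟩, rfl⟩
  · simp [P, sub_mul, mul_add, hPP, permMatrix_mul_single, single_mul_permMatrix, hij]
  · simp [P, add_mul, mul_sub, hPP, permMatrix_mul_single, single_mul_permMatrix, hij.symm]

theorem isIdempotentElem_single_one [Fintype ι] [NonAssocSemiring R] (i : ι) :
    IsIdempotentElem (single i i (1 : R)) := by
  rw [IsIdempotentElem, single_mul_single_same, mul_one]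

theorem single_ne_zero [Zero R] (i j : ι) {c : R} (hc : c ≠ 0) : single i j c ≠ 0 :=
  fun h => hc (by simpa using congr_fun₂ h i j)

end Matrix

open Matrix in
/-- For any (nontrivial) ring `R` and `n ≥ 2`, `Mₙ(R)` is not conjugate clean: some
matrix has two clean decompositions whose idempotents are not conjugate. -/
theorem matrix_not_conjClean (R : Type*) [Ring R] [Nontrivial R] (n : ℕ) (hn : 2 ≤ n) :
    ∃ a e u f v : Matrix (Fin n) (Fin n) R,
      IsIdempotentElem e ∧ IsUnit u ∧ a = e + u ∧
      IsIdempotentElem f ∧ IsUnit v ∧ a = f + v ∧ ¬ ConjugateIdem e f := by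
  let i : Fin n := ⟨0, by omega⟩
  let j : Fin n := ⟨1, by omega⟩
  have hij : i ≠ j := by simp [i, j, Fin.ext_iff]
  let P := (Equiv.swap i j).permMatrix R
  refine ⟨P, 0, P, single i i 1, P - single i i 1, .zero, isUnit_swap_permMatrix (R := R) i j,
    (zero_add P).symm, isIdempotentElem_single_one i, isUnit_swap_permMatrix_sub_single hij,
    (add_sub_cancel _ _).symm, fun h => single_ne_zero i i one_ne_zero h.eq_zero_of_zero_left⟩
end

section
/- A finite product R₁ × ⋯ × Rₙ of rings is conjugate nil clean if and only if each Rᵢ is conjugate nil clean. -/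
/-!
Everything is coordinatewise; nilpotency needs the finiteness of the product to bound the
exponents. For uniqueness in a single factor, two nil clean decompositions of `a i` are extended
to decompositions of `a` by one fixed decomposition of `a` in the other coordinates, and the
conjugating unit of the product is then projected to the `i`-th factor.
-/

open Function

section Pi

variable {ι : Type*} {R : ι → Type*}

theorem Pi.isIdempotentElem_iff [∀ i, Mul (R i)] {e : ∀ i, R i} :
    IsIdempotentElem e ↔ ∀ i, IsIdempotentElem (e i) :=
  funext_iff

theorem Pi.isNilpotent_iff [Finite ι] [∀ i, MonoidWithZero (R i)] {x : ∀ i, R i} :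
    IsNilpotent x ↔ ∀ i, IsNilpotent (x i) := by
  refine ⟨fun ⟨k, hk⟩ i => ⟨k, congrFun hk i⟩, fun h => ?_⟩
  choose k hk using h
  obtain ⟨K, hK⟩ := Finite.exists_le k
  exact ⟨K, funext fun i => pow_eq_zero_of_le (hK i) (hk i)⟩

variable [∀ i, Ring (R i)]

theorem Pi.conjugateIdem_iff {e f : ∀ i, R i} :
    ConjugateIdem e f ↔ ∀ i, ConjugateIdem (e i) (f i) := by
  refine ⟨fun ⟨u, hu⟩ i => ⟨Units.map (Pi.evalMonoidHom R i) u, congrFun hu i⟩, fun h => ?_⟩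
  choose u hu using h
  exact ⟨MulEquiv.piUnits.symm u, funext hu⟩

theorem Pi.isNilCleanElem_iff [Finite ι] {a : ∀ i, R i} :
    IsNilCleanElem a ↔ ∀ i, IsNilCleanElem (a i) := by
  refine ⟨fun ⟨e, n, he, hn, hen⟩ i =>
    ⟨e i, n i, Pi.isIdempotentElem_iff.1 he i, Pi.isNilpotent_iff.1 hn i, congrFun hen i⟩,
    fun h => ?_⟩
  choose e n he hn hen using h
  exact ⟨e, n, Pi.isIdempotentElem_iff.2 he, Pi.isNilpotent_iff.2 hn, funext hen⟩

theorem Pi.update_nilClean_decomposition [Finite ι] [DecidableEq ι] {e n : ∀ i, R i}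
    (he : IsIdempotentElem e) (hn : IsNilpotent n) (i : ι) {e₀ n₀ : R i}
    (he₀ : IsIdempotentElem e₀) (hn₀ : IsNilpotent n₀) (h : (e + n) i = e₀ + n₀) :
    IsIdempotentElem (update e i e₀) ∧ IsNilpotent (update n i n₀) ∧
      e + n = update e i e₀ + update n i n₀ := by
  refine ⟨Pi.isIdempotentElem_iff.2 ?_, Pi.isNilpotent_iff.2 ?_, ?_⟩
  · exact (forall_update_iff e fun j x => IsIdempotentElem x).2
      ⟨he₀, fun j _ => Pi.isIdempotentElem_iff.1 he j⟩
  · exact (forall_update_iff n fun j x => IsNilpotent x).2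
      ⟨hn₀, fun j _ => Pi.isNilpotent_iff.1 hn j⟩
  · rw [← update_add, update_eq_self_iff.2 h.symm]

theorem Pi.isConjNilCleanElem_iff [Finite ι] {a : ∀ i, R i} :
    IsConjNilCleanElem a ↔ ∀ i, IsConjNilCleanElem (a i) := by
  classical
  constructor
  · rintro ⟨hclean, hconj⟩ i
    refine ⟨Pi.isNilCleanElem_iff.1 hclean i, fun e₀ n₀ f₀ m₀ he₀ hn₀ h₀ hf₀ hm₀ h₀' => ?_⟩
    obtain ⟨e, n, he, hn, rfl⟩ := hclean
    obtain ⟨he', hn', hen'⟩ := Pi.update_nilClean_decomposition he hn i he₀ hn₀ h₀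
    obtain ⟨hf', hm', hfm'⟩ := Pi.update_nilClean_decomposition he hn i hf₀ hm₀ h₀'
    simpa using Pi.conjugateIdem_iff.1 (hconj _ _ _ _ he' hn' hen' hf' hm' hfm') i
  · intro h
    refine ⟨Pi.isNilCleanElem_iff.2 fun i => (h i).1,
      fun e n f m he hn hen hf hm hfm => Pi.conjugateIdem_iff.2 fun i => ?_⟩
    exact (h i).2 (e i) (n i) (f i) (m i) (Pi.isIdempotentElem_iff.1 he i)
      (Pi.isNilpotent_iff.1 hn i) (congrFun hen i) (Pi.isIdempotentElem_iff.1 hf i)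
      (Pi.isNilpotent_iff.1 hm i) (congrFun hfm i)

end Pi

/-- A finite product of rings is conjugate nil clean iff each factor is. -/
theorem pi_conjNilClean_iff {n : ℕ} (R : Fin n → Type*) [∀ i, Ring (R i)] :
    (∀ a : (∀ i, R i), IsConjNilCleanElem a) ↔
      ∀ i, ∀ a : R i, IsConjNilCleanElem a := by
  refine ⟨fun h i a => ?_, fun h a => Pi.isConjNilCleanElem_iff.2 fun i => h i (a i)⟩
  simpa using Pi.isConjNilCleanElem_iff.1 (h (Pi.single i a)) i
end

section
/- If R is a nil clean ring, then 2R is a nil ideal of R; in fact the element 2 = 1 + 1 is nilpotent in R. -/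
/-! Write `-1 = e + n`. Then `e = -(1 + n)` is a unit, and the only idempotent unit is `1`;
hence `n = -2` and `2` is nilpotent. Since `2` is central, every element `r * 2` of `2R`
is nilpotent as well. -/

theorem isNilpotent_two_of_isNilCleanElem_neg_one {R : Type*} [Ring R]
    (h : IsNilCleanElem (-1 : R)) : IsNilpotent (2 : R) := by
  obtain ⟨e, n, he, hn, hen⟩ := h
  have he_neg : e = -(1 + n) := by rw [neg_add, hen]; abel
  have he_unit : IsUnit e := he_neg ▸ hn.isUnit_one_add.neg
  have he_one : e = 1 := (IsIdempotentElem.iff_eq_one_of_isUnit he_unit).mp he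
  have hn_eq : n = -2 :=
    calc n = -1 - 1 := by rw [hen, he_one]; abel
      _ = -2 := by norm_num
  simpa [hn_eq] using hn.neg

theorem isNilpotent_of_mem_span_singleton {R : Type*} [Ring R] {c x : R}
    (hc : IsNilpotent c) (hc_comm : ∀ r : R, Commute r c) (hx : x ∈ Ideal.span {c}) :
    IsNilpotent x := by
  obtain ⟨r, rfl⟩ := Ideal.mem_span_singleton'.mp hx
  exact (hc_comm r).isNilpotent_mul_left hc

/-- In a nil clean ring, `2` is nilpotent and the ideal `2R` is nil. -/
theorem two_nilpotent_of_nilClean {R : Type*} [Ring R]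
    (hR : ∀ a : R, IsNilCleanElem a) :
    IsNilpotent (2 : R) ∧ ∀ x ∈ Ideal.span ({2} : Set R), IsNilpotent x := by
  have h2 : IsNilpotent (2 : R) := isNilpotent_two_of_isNilCleanElem_neg_one (hR (-1))
  exact ⟨h2, fun x hx ↦ isNilpotent_of_mem_span_singleton h2 (fun r ↦ Commute.ofNat_right r 2) hx⟩
end

section
/- Let R be a commutative ring. Then R is nil clean if and only if R/J(R) is a Boolean ring and J(R) is a nil ideal. -/
/-!
Nilpotents lie in `J(R)`, and an idempotent `e ∈ J(R)` vanishes because `1 - e` is then an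
idempotent unit. Hence reducing a nil clean decomposition modulo `J(R)` kills its nilpotent part,
and the decomposition of an element of `J(R)` has no idempotent part. Conversely, idempotents
lift modulo a nil ideal, so an element `a` is congruent to an idempotent `e` modulo the nil ideal
`J(R)`, and `a - e` is nilpotent.
-/

open Ideal

def IsNilClean (R : Type*) [Ring R] : Prop :=
  ∀ a : R, ∃ e n : R, IsIdempotentElem e ∧ IsNilpotent n ∧ a = e + n

section CommRing

variable {R : Type*} [CommRing R]

theorem IsNilpotent.mem_jacobson_bot {x : R} (hx : IsNilpotent x) :
    x ∈ jacobson (⊥ : Ideal R) :=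
  radical_le_jacobson (mem_nilradical.mpr hx)

theorem IsIdempotentElem.eq_zero_of_mem_jacobson_bot {e : R} (he : IsIdempotentElem e)
    (hJ : e ∈ jacobson (⊥ : Ideal R)) : e = 0 := by
  have hunit : IsUnit (1 - e) := by
    simpa [sub_eq_neg_add, add_comm] using mem_jacobson_bot.1 hJ (-1)
  simpa using (IsIdempotentElem.iff_eq_one_of_isUnit hunit).1 he.one_sub

namespace IsNilClean

theorem isIdempotentElem_quotient (h : IsNilClean R) {I : Ideal R} (hI : nilradical R ≤ I)
    (b : R ⧸ I) : IsIdempotentElem b := by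
  obtain ⟨a, rfl⟩ := Ideal.Quotient.mk_surjective b
  obtain ⟨e, n, he, hn, rfl⟩ := h a
  have hn0 : Ideal.Quotient.mk I n = 0 :=
    Ideal.Quotient.eq_zero_iff_mem.2 (hI (mem_nilradical.2 hn))
  simpa [hn0] using he.map (Ideal.Quotient.mk I)

theorem isNilpotent_of_mem_jacobson_bot (h : IsNilClean R) {x : R}
    (hx : x ∈ jacobson (⊥ : Ideal R)) : IsNilpotent x := by
  obtain ⟨e, n, he, hn, rfl⟩ := h x
  have he0 : e = 0 :=
    he.eq_zero_of_mem_jacobson_bot (by simpa using sub_mem hx hn.mem_jacobson_bot)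
  simpa [he0] using hn

end IsNilClean

theorem isNilClean_of_isIdempotentElem_quotient {I : Ideal R} (hnil : ∀ x ∈ I, IsNilpotent x)
    (hbool : ∀ b : R ⧸ I, IsIdempotentElem b) : IsNilClean R := by
  intro a
  obtain ⟨e, he, hea⟩ := exists_isIdempotentElem_eq_of_ker_isNilpotent (Ideal.Quotient.mk I)
    (by simpa only [mk_ker] using hnil) _ ⟨a, rfl⟩ (hbool (Ideal.Quotient.mk I a))
  exact ⟨e, a - e, he, hnil _ (Ideal.Quotient.eq.1 hea.symm), by ring⟩

end CommRing

/-- A commutative ring is nil clean iff `R/J(R)` is Boolean and `J(R)` is nil. -/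
theorem commRing_nilClean_iff {R : Type*} [CommRing R] :
    (∀ a : R, ∃ e n : R, IsIdempotentElem e ∧ IsNilpotent n ∧ a = e + n) ↔
    ((∀ b : R ⧸ Ideal.jacobson (⊥ : Ideal R), IsIdempotentElem b) ∧
      ∀ x ∈ Ideal.jacobson (⊥ : Ideal R), IsNilpotent x) :=
  ⟨fun h => ⟨IsNilClean.isIdempotentElem_quotient h radical_le_jacobson,
      fun _ => IsNilClean.isNilpotent_of_mem_jacobson_bot h⟩,
    fun ⟨hbool, hnil⟩ => isNilClean_of_isIdempotentElem_quotient hnil hbool⟩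
end
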